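/- Let 𝔤 be a finite-dimensional real Lie algebra and 𝔥 a subalgebra of codimension N such that the 𝔥-action on 𝔤/𝔥 is trace-free, and let Φ be a nonzero element of (Λ^N(𝔤/𝔥)*)^𝔥. Then for every Y in the normalizer 𝔫_𝔤(𝔥), the Chevalley–Eilenberg differential satisfies d(ι(Y)Φ) = −tr(ad_{𝔤/𝔥}(Y))·Φ. -/

import Mathlib

/-!
For an endomorphism `A` write `θ_A ω (v) = ∑ₖ ω (v₀, …, A vₖ, …, vₙ)` (`derivComp`). Expanding the
Chevalley–Eilenberg differential at a first argument `Y` gives the Cartan formula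
`(dω)(Y, x) = -θ_{ad Y} ω (x) - d(ι_Y ω)(x)`. For a horizontal `𝔥`-invariant `Φ` it shows that
`dΦ` is again horizontal; since `dΦ` has degree `N + 1 > dim 𝔤/𝔥`, it vanishes. The Cartan formula
at `Y` then reads `d(ι_Y Φ) = -θ_{ad Y} Φ`, and `Φ` descends to a top-degree form on `𝔤/𝔥`, on
which every endomorphism acts through `θ` by multiplication with its trace.
-/

open Module

/-- The Chevalley–Eilenberg differential (trivial coefficients), written pointwise:
`(dω)(x₀,…,xₚ) = ∑_{i<j} (-1)^{i+j} ω([xᵢ,xⱼ], x₀,…,x̂ᵢ,…,x̂ⱼ,…,xₚ)`. -/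
noncomputable def ceD {𝔤 : Type} [LieRing 𝔤] [LieAlgebra ℝ 𝔤] (p : ℕ)
    (ω : (Fin p → 𝔤) → ℝ) : (Fin (p + 1) → 𝔤) → ℝ :=
  fun x => ∑ i : Fin (p + 1), ∑ j : Fin (p + 1),
    if (i : ℕ) < (j : ℕ) then
      (-1 : ℝ) ^ ((i : ℕ) + (j : ℕ)) *
        ω (fun k =>
          (⁅x i, x j⁆ :: (((List.ofFn x).eraseIdx j).eraseIdx i)).getD k 0)
    else 0

/-- `ad_{𝔤/𝔥}(Y)` for `Y` in the normalizer of `𝔥`. -/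
noncomputable def adQN {𝔤 : Type} [LieRing 𝔤] [LieAlgebra ℝ 𝔤] (𝔥 : LieSubalgebra ℝ 𝔤)
    (Y : 𝔤) (hY : Y ∈ 𝔥.normalizer) :
    (𝔤 ⧸ 𝔥.toSubmodule) →ₗ[ℝ] 𝔤 ⧸ 𝔥.toSubmodule :=
  Submodule.mapQ _ _ (LieAlgebra.ad ℝ 𝔤 Y)
    (by intro z hz; simpa using (𝔥.mem_normalizer_iff Y).mp hY z hz)

/-- `ad_{𝔤/𝔥}(X)` for `X ∈ 𝔥`. -/
noncomputable def adQH {𝔤 : Type} [LieRing 𝔤] [LieAlgebra ℝ 𝔤] (𝔥 : LieSubalgebra ℝ 𝔤)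
    (X : 𝔥) : (𝔤 ⧸ 𝔥.toSubmodule) →ₗ[ℝ] 𝔤 ⧸ 𝔥.toSubmodule :=
  Submodule.mapQ _ _ (LieAlgebra.ad ℝ 𝔤 (X : 𝔤))
    (by intro z hz; simpa using 𝔥.lie_mem X.2 hz)

theorem List.eraseIdx_ofFn {α : Type*} {n : ℕ} (f : Fin (n + 1) → α) (p : Fin (n + 1)) :
    (List.ofFn f).eraseIdx p = List.ofFn (p.removeNth f) := by
  refine List.ext_getElem (by rw [List.length_eraseIdx_of_lt (by simp [p.is_lt])]; simp)
    fun k _ h => ?_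
  simp only [List.length_ofFn] at h
  simp only [List.getElem_eraseIdx, List.getElem_ofFn, Fin.removeNth_apply]
  split_ifs with hk
  · exact congrArg f (Fin.ext (by simp [Fin.succAbove_of_castSucc_lt, Fin.lt_def, hk]))
  · rw [Fin.succAbove_of_le_castSucc _ _ (by simp [Fin.le_def]; omega)]
    rfl

theorem Fin.removeNth_succ_cons {α : Type*} {n : ℕ} (l : Fin (n + 1)) (a : α)
    (z : Fin (n + 1) → α) :
    l.succ.removeNth (Fin.cons a z : Fin (n + 2) → α) = Fin.cons a (l.removeNth z) := by
  funext k
  cases k using Fin.cases <;> simp [Fin.removeNth_apply, Fin.succ_succAbove_succ]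

theorem Fin.sum_sum_ite_lt {M : Type*} [AddCommMonoid M] {n : ℕ}
    (G : Fin (n + 2) → Fin (n + 2) → M) :
    ∑ a, ∑ b, (if a < b then G a b else 0) = ∑ i : Fin (n + 1), ∑ j ≥ i, G i.castSucc j.succ := by
  have hrow (j : Fin (n + 1)) : ∑ a, (if a < j.succ then G a j.succ else 0) =
      ∑ i : Fin (n + 1), if i ≤ j then G i.castSucc j.succ else 0 := by
    simp [Fin.sum_univ_castSucc, Fin.castSucc_lt_succ_iff, not_lt.mpr (Fin.le_last _)]
  rw [Finset.sum_comm, Fin.sum_univ_succ]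
  simp only [Fin.not_lt_zero, if_false, Finset.sum_const_zero, zero_add, hrow]
  rw [Finset.sum_comm]
  simp only [← Finset.sum_filter, Finset.filter_le_eq_Ici]

namespace AlternatingMap

section CommRing

variable {R M M' N : Type*} [CommRing R] [AddCommGroup M] [Module R M] [AddCommGroup M']
  [Module R M'] [AddCommGroup N] [Module R N] {n : ℕ}

theorem curryLeft_curryLeft_swap (f : M [⋀^Fin (n + 2)]→ₗ[R] N) (a b : M) :
    (f.curryLeft a).curryLeft b = -(f.curryLeft b).curryLeft a := by
  have h := f.curryLeft_same (a + b)
  simp only [map_add, curryLeft_add, LinearMap.add_apply, curryLeft_same, zero_add,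
    add_zero] at h
  exact eq_neg_of_add_eq_zero_right h

/-- Defined by uncurrying so that it is alternating by construction; `derivComp_apply` gives the
usual formula `∑ₖ ω (v₀, …, A vₖ, …, vₙ)`. -/
def derivComp (ω : M [⋀^Fin (n + 1)]→ₗ[R] N) (A : M →ₗ[R] M) : M [⋀^Fin (n + 1)]→ₗ[R] N :=
  alternatizeUncurryFin (ω.curryLeft ∘ₗ A)

theorem derivComp_apply (ω : M [⋀^Fin (n + 1)]→ₗ[R] N) (A : M →ₗ[R] M) (v : Fin (n + 1) → M) :
    ω.derivComp A v = ∑ k, ω (Function.update v k (A (v k))) := by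
  simp only [derivComp, alternatizeUncurryFin_apply, LinearMap.comp_apply, curryLeft_apply_apply,
    ← map_insertNth, Fin.insertNth_removeNth]

theorem derivComp_compLinearMap (ω : M' [⋀^Fin (n + 1)]→ₗ[R] N) (f : M →ₗ[R] M')
    {A : M →ₗ[R] M} {B : M' →ₗ[R] M'} (h : f ∘ₗ A = B ∘ₗ f) :
    (ω.compLinearMap f).derivComp A = (ω.derivComp B).compLinearMap f := by
  ext v
  simp only [derivComp_apply, compLinearMap_apply]
  refine Finset.sum_congr rfl fun k _ => congrArg ω ?_
  ext i
  rcases eq_or_ne i k with rfl | hik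
  · simpa using LinearMap.congr_fun h (v i)
  · simp [Function.update_of_ne hik]

theorem derivComp_eq_trace_smul [Nontrivial R] [Module.Free R M] [Module.Finite R M]
    (h : finrank R M = n + 1) (ω : M [⋀^Fin (n + 1)]→ₗ[R] R) (A : M →ₗ[R] M) :
    ω.derivComp A = LinearMap.trace R M A • ω := by
  classical
  let e := Module.finBasisOfFinrankEq R M h
  have he : ω.derivComp A e = LinearMap.trace R M A * ω e := by
    rw [derivComp_apply, LinearMap.trace_eq_matrix_trace R e, Matrix.trace, Finset.sum_mul]
    refine Finset.sum_congr rfl fun k _ => ?_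
    conv_lhs => rw [← e.sum_repr (A (e k))]
    rw [ω.map_update_sum, Finset.sum_eq_single k]
    · rw [ω.map_update_smul, Function.update_eq_self, smul_eq_mul, Matrix.diag,
        LinearMap.toMatrix_apply]
    · intro a _ hak
      rw [ω.map_update_smul, ω.map_update_self _ hak.symm, smul_zero]
    · simp
  conv_lhs => rw [(ω.derivComp A).eq_smul_basis_det e, he]
  conv_rhs => rw [ω.eq_smul_basis_det e, smul_smul]

end CommRing

def IsHorizontal {R M N ι : Type*} [Semiring R] [AddCommMonoid M] [Module R M] [AddCommMonoid N]
    [Module R N] (W : Submodule R M) (ω : M [⋀^ι]→ₗ[R] N) : Prop :=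
  ∀ v : ι → M, (∃ i, v i ∈ W) → ω v = 0

theorem isHorizontal_of_forall_cons {R M N : Type*} [Semiring R] [AddCommMonoid M] [Module R M]
    [AddCommGroup N] [Module R N] {W : Submodule R M} {n : ℕ} {ω : M [⋀^Fin (n + 1)]→ₗ[R] N}
    (hω : ∀ y ∈ W, ∀ x, ω (Fin.cons y x) = 0) : IsHorizontal W ω := by
  rintro v ⟨i, hi⟩
  rcases eq_or_ne i 0 with rfl | hi0
  · rw [← Fin.cons_self_tail v]
    exact hω _ hi _
  · rw [← neg_eq_zero, ← ω.map_swap v hi0, ← Fin.cons_self_tail (v ∘ _)]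
    exact hω _ (by simpa) _

namespace IsHorizontal

theorem map_eq_of_sub_mem {R M N ι : Type*} [Ring R] [AddCommGroup M] [Module R M]
    [AddCommMonoid N] [Module R N] [Fintype ι] {W : Submodule R M} {ω : M [⋀^ι]→ₗ[R] N}
    (hω : IsHorizontal W ω) {v w : ι → M} (h : ∀ i, v i - w i ∈ W) : ω v = ω w := by
  classical
  rw [← add_sub_cancel w v, ω.map_add_univ, Finset.sum_eq_single Finset.univ]
  · rw [Finset.piecewise_univ]
  · intro s _ hs
    obtain ⟨i, -, his⟩ := Finset.exists_of_ssubset (Finset.ssubset_univ_iff.mpr hs)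
    exact hω _ ⟨i, by simpa [Finset.piecewise_eq_of_notMem _ _ _ his] using h i⟩
  · simp

variable {K M N ι : Type*} [Field K] [AddCommGroup M] [Module K M] [AddCommGroup N] [Module K N]
  [Fintype ι] {W : Submodule K M} {ω : M [⋀^ι]→ₗ[K] N}

theorem exists_eq_compLinearMap_mkQ (hω : IsHorizontal W ω) :
    ∃ ω' : (M ⧸ W) [⋀^ι]→ₗ[K] N, ω = ω'.compLinearMap W.mkQ := by
  obtain ⟨s, hs⟩ := W.mkQ.exists_rightInverse_of_surjective W.range_mkQ
  refine ⟨ω.compLinearMap s, ext fun v => hω.map_eq_of_sub_mem fun i => ?_⟩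
  rw [← Submodule.Quotient.mk_eq_zero, Submodule.Quotient.mk_sub]
  simpa [sub_eq_zero] using (LinearMap.congr_fun hs (W.mkQ (v i))).symm

theorem eq_zero [FiniteDimensional K M] (hω : IsHorizontal W ω)
    (h : finrank K (M ⧸ W) < Fintype.card ι) : ω = 0 := by
  obtain ⟨ω', rfl⟩ := hω.exists_eq_compLinearMap_mkQ
  ext v
  exact ω'.map_linearDependent _ fun hv => (hv.fintype_card_le_finrank.trans_lt h).false

theorem derivComp_eq [FiniteDimensional K M] {n : ℕ} {ω : M [⋀^Fin (n + 1)]→ₗ[K] K}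
    (hω : IsHorizontal W ω) (hW : finrank K (M ⧸ W) = n + 1) {A : M →ₗ[K] M}
    {B : (M ⧸ W) →ₗ[K] M ⧸ W} (hB : W.mkQ ∘ₗ A = B ∘ₗ W.mkQ) :
    ω.derivComp A = LinearMap.trace K _ B • ω := by
  obtain ⟨ω', rfl⟩ := hω.exists_eq_compLinearMap_mkQ
  rw [derivComp_compLinearMap _ _ hB, derivComp_eq_trace_smul hW]
  rfl

end IsHorizontal

section LieCurry

variable {R L N : Type*} [CommRing R] [LieRing L] [LieAlgebra R L] [AddCommGroup N] [Module R N]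
  {n : ℕ}

def lieCurry (ω : L [⋀^Fin (n + 1)]→ₗ[R] N) : L →ₗ[R] L →ₗ[R] L [⋀^Fin n]→ₗ[R] N :=
  (LieAlgebra.ad R L : L →ₗ[R] Module.End R L).compr₂ ω.curryLeft

@[simp]
theorem lieCurry_apply (ω : L [⋀^Fin (n + 1)]→ₗ[R] N) (a b : L) (v : Fin n → L) :
    ω.lieCurry a b v = ω (Matrix.vecCons ⁅a, b⁆ v) :=
  rfl

theorem lieCurry_swap (ω : L [⋀^Fin (n + 1)]→ₗ[R] N) (a b : L) :
    ω.lieCurry b a = -ω.lieCurry a b := by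
  change ω.curryLeft ⁅b, a⁆ = -ω.curryLeft ⁅a, b⁆
  rw [← lie_skew, map_neg]

theorem alternatizeUncurryFin_lieCurry (ω : L [⋀^Fin (n + 1)]→ₗ[R] N) (a : L) :
    alternatizeUncurryFin (ω.lieCurry a) = ω.derivComp (LieAlgebra.ad R L a) :=
  rfl

theorem alternatizeUncurryFin_lieCurry_apply_cons (ω : L [⋀^Fin (n + 2)]→ₗ[R] N) (a Y : L)
    (z : Fin (n + 1) → L) :
    alternatizeUncurryFin (ω.lieCurry a) (Fin.cons Y z) =
      ω.lieCurry a Y z + alternatizeUncurryFin ((ω.curryLeft Y).lieCurry a) z := by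
  rw [alternatizeUncurryFin_apply, Fin.sum_univ_succ, alternatizeUncurryFin_apply]
  congr 1
  · simp
  refine Finset.sum_congr rfl fun l _ => ?_
  have h : ω (Matrix.vecCons ⁅a, z l⁆ (Fin.cons Y (l.removeNth z))) =
      -ω (Matrix.vecCons Y (Matrix.vecCons ⁅a, z l⁆ (l.removeNth z))) :=
    congrArg (· (l.removeNth z)) (ω.curryLeft_curryLeft_swap ⁅a, z l⁆ Y)
  simp [Fin.removeNth_succ_cons, h, pow_succ]

theorem alternatizeUncurryFin_alternatizeUncurryFinLM_comp_lieCurry_apply_cons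
    (ω : L [⋀^Fin (n + 2)]→ₗ[R] N) (Y : L) (x : Fin (n + 2) → L) :
    alternatizeUncurryFin (alternatizeUncurryFinLM ∘ₗ ω.lieCurry) (Fin.cons Y x) =
      (2 : R) • ω.derivComp (LieAlgebra.ad R L Y) x -
        alternatizeUncurryFin (alternatizeUncurryFinLM ∘ₗ (ω.curryLeft Y).lieCurry) x := by
  have hθ : ∑ k : Fin (n + 2), (-1 : ℤ) ^ (k : ℕ) • ω.lieCurry (x k) Y (k.removeNth x) =
      -ω.derivComp (LieAlgebra.ad R L Y) x := by
    simp only [lieCurry_swap ω Y, ← alternatizeUncurryFin_lieCurry, alternatizeUncurryFin_apply,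
      neg_apply, smul_neg, Finset.sum_neg_distrib]
  rw [alternatizeUncurryFin_apply, Fin.sum_univ_succ, alternatizeUncurryFin_apply (f := _ ∘ₗ _)]
  simp only [Fin.cons_zero, Fin.removeNth_zero, Fin.tail_cons, Fin.cons_succ,
    Fin.removeNth_succ_cons, LinearMap.comp_apply, alternatizeUncurryFinLM_apply,
    alternatizeUncurryFin_lieCurry_apply_cons, Fin.val_zero, Fin.val_succ, pow_zero, one_smul,
    pow_succ, mul_neg_one, neg_smul, smul_add, Finset.sum_neg_distrib, Finset.sum_add_distrib, hθ]
  rw [alternatizeUncurryFin_lieCurry, two_smul]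
  abel

end LieCurry

end AlternatingMap

open AlternatingMap

section ChevalleyEilenberg

variable {𝔤 : Type} [LieRing 𝔤] [LieAlgebra ℝ 𝔤]

theorem ceD_succ_eq_sum {n : ℕ} (ω : (Fin (n + 1) → 𝔤) → ℝ) (x : Fin (n + 2) → 𝔤) :
    ceD (n + 1) ω x = ∑ i : Fin (n + 1), ∑ j ≥ i, (-1) ^ ((i : ℕ) + (j : ℕ) + 1) *
      ω (Matrix.vecCons ⁅x i.castSucc, x j.succ⁆ (j.removeNth (i.castSucc.removeNth x))) := by
  simp only [ceD, ← Fin.lt_def]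
  rw [Fin.sum_sum_ite_lt]
  refine Finset.sum_congr rfl fun i _ => Finset.sum_congr rfl fun j hj => ?_
  have hij : i.castSucc < j.succ := Fin.castSucc_lt_succ_iff.mpr (Finset.mem_Ici.mp hj)
  rw [List.eraseIdx_ofFn, Fin.val_castSucc, List.eraseIdx_ofFn, Fin.removeNth_removeNth_eq_swap,
    Fin.succAbove_of_castSucc_lt _ _ hij, Fin.predAbove_of_castSucc_lt _ _ hij, Fin.pred_succ]
  congr 2
  funext k
  cases k using Fin.cases <;> simp

/-- The Chevalley–Eilenberg differential as an alternating map. Uncurrying the bracket twice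
counts each pair `i < j` twice and with the sign opposite to that of `ceD`, whence `-1/2`. -/
noncomputable def ceDifferential {n : ℕ} (ω : 𝔤 [⋀^Fin (n + 1)]→ₗ[ℝ] ℝ) :
    𝔤 [⋀^Fin (n + 2)]→ₗ[ℝ] ℝ :=
  (-2⁻¹ : ℝ) • alternatizeUncurryFin (alternatizeUncurryFinLM ∘ₗ ω.lieCurry)

theorem ceDifferential_apply {n : ℕ} (ω : 𝔤 [⋀^Fin (n + 1)]→ₗ[ℝ] ℝ) (x : Fin (n + 2) → 𝔤) :
    ceDifferential ω x = ceD (n + 1) ω x := by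
  rw [ceDifferential, AlternatingMap.smul_apply,
    alternatizeUncurryFin_alternatizeUncurryFinLM_comp_apply, ceD_succ_eq_sum, Finset.smul_sum]
  refine Finset.sum_congr rfl fun i _ => ?_
  rw [Finset.smul_sum]
  refine Finset.sum_congr rfl fun j _ => ?_
  simp only [lieCurry_swap ω (x i.castSucc) (x j.succ), AlternatingMap.neg_apply, sub_neg_eq_add,
    lieCurry_apply, zsmul_eq_mul, smul_eq_mul, pow_succ]
  push_cast
  ring

theorem ceDifferential_cons {n : ℕ} (ω : 𝔤 [⋀^Fin (n + 1)]→ₗ[ℝ] ℝ) (Y : 𝔤)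
    (x : Fin (n + 1) → 𝔤) :
    ceDifferential ω (Fin.cons Y x) =
      -ω.derivComp (LieAlgebra.ad ℝ 𝔤 Y) x - ceD n (fun w => ω (Matrix.vecCons Y w)) x := by
  cases n with
  | zero =>
    have hcons : Matrix.vecCons ⁅Y, x 0⁆ (Fin.tail x) = Function.update x 0 ⁅Y, x 0⁆ := by
      ext i
      fin_cases i
      rfl
    have hskew : ω (Matrix.vecCons ⁅x 0, Y⁆ (Fin.tail x)) =
        -ω (Matrix.vecCons ⁅Y, x 0⁆ (Fin.tail x)) :=
      congrArg (· (Fin.tail x)) (lieCurry_swap ω Y (x 0))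
    rw [ceDifferential, AlternatingMap.smul_apply,
      alternatizeUncurryFin_alternatizeUncurryFinLM_comp_apply]
    simp [ceD, derivComp_apply, hskew, hcons]
    ring
  | succ n =>
    have hι : ceD (n + 1) (fun w => ω (Matrix.vecCons Y w)) x =
        ceDifferential (ω.curryLeft Y) x := by
      rw [ceDifferential_apply]
      congr 1
    rw [hι, ceDifferential, AlternatingMap.smul_apply,
      alternatizeUncurryFin_alternatizeUncurryFinLM_comp_lieCurry_apply_cons, ceDifferential,
      AlternatingMap.smul_apply]
    simp only [smul_eq_mul]
    ring

theorem ceDifferential_eq_zero_of_isHorizontal [FiniteDimensional ℝ 𝔤] {W : Submodule ℝ 𝔤}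
    {n : ℕ} (hW : finrank ℝ (𝔤 ⧸ W) = n + 1) {ω : 𝔤 [⋀^Fin (n + 1)]→ₗ[ℝ] ℝ}
    (hω : IsHorizontal W ω) (hinv : ∀ X ∈ W, ω.derivComp (LieAlgebra.ad ℝ 𝔤 X) = 0) :
    ceDifferential ω = 0 := by
  refine IsHorizontal.eq_zero (W := W) (isHorizontal_of_forall_cons fun y hy x => ?_)
    (by simp [hW])
  have hι : (fun w => ω (Matrix.vecCons y w)) = fun _ => 0 := funext fun w => hω _ ⟨0, hy⟩
  rw [ceDifferential_cons, hinv y hy, hι]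
  simp [ceD]

end ChevalleyEilenberg

/-- Relative cochains `(Λ^p(𝔤/𝔥)*)^𝔥` are modelled as alternating forms on `𝔤` that are
horizontal (vanish when some argument lies in `𝔥`) and `𝔥`-invariant. -/
theorem stmt2_general (𝔤 : Type) [LieRing 𝔤] [LieAlgebra ℝ 𝔤] [FiniteDimensional ℝ 𝔤]
    (𝔥 : LieSubalgebra ℝ 𝔤) (n : ℕ)
    (hN : n + 1 = Module.finrank ℝ (𝔤 ⧸ 𝔥.toSubmodule))
    (Φ : 𝔤 [⋀^Fin (n + 1)]→ₗ[ℝ] ℝ)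
    (hhor : ∀ v : Fin (n + 1) → 𝔤, (∃ i, v i ∈ 𝔥) → Φ v = 0)
    (hinv : ∀ X ∈ 𝔥, ∀ v : Fin (n + 1) → 𝔤,
      ∑ i, Φ (Function.update v i ⁅X, v i⁆) = 0)
    (Y : 𝔤) (hY : Y ∈ 𝔥.normalizer) :
    ∀ x : Fin (n + 1) → 𝔤,
      ceD n (fun w => Φ (Matrix.vecCons Y w)) x =
        -(LinearMap.trace ℝ _ (adQN 𝔥 Y hY)) * Φ x := by
  intro x
  have hΦ : IsHorizontal 𝔥.toSubmodule Φ := hhor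
  have hclosed : ceDifferential Φ = 0 :=
    ceDifferential_eq_zero_of_isHorizontal hN.symm hΦ fun X hX =>
      ext fun v => by simpa [derivComp_apply] using hinv X hX v
  have htrace : Φ.derivComp (LieAlgebra.ad ℝ 𝔤 Y) = LinearMap.trace ℝ _ (adQN 𝔥 Y hY) • Φ :=
    hΦ.derivComp_eq hN.symm (LinearMap.ext fun _ => rfl)
  have hcartan := ceDifferential_cons Φ Y x
  rw [hclosed, htrace] at hcartan
  simp only [AlternatingMap.zero_apply, AlternatingMap.smul_apply, smul_eq_mul] at hcartan
  linarith

/-- Relative cochains `(Λ^p(𝔤/𝔥)*)^𝔥` are modelled as alternating forms on `𝔤` that are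
horizontal (vanish when some argument lies in `𝔥`) and `𝔥`-invariant.  For `Y` in the
normalizer of `𝔥` one has `d(ι(Y)Φ) = −tr(ad_{𝔤/𝔥}(Y))·Φ`. -/
theorem stmt2 (𝔤 : Type) [LieRing 𝔤] [LieAlgebra ℝ 𝔤] [FiniteDimensional ℝ 𝔤]
    (𝔥 : LieSubalgebra ℝ 𝔤) (n : ℕ)
    (hN : n + 1 = Module.finrank ℝ (𝔤 ⧸ 𝔥.toSubmodule))
    (htf : ∀ X : 𝔥, LinearMap.trace ℝ _ (adQH 𝔥 X) = 0)
    (Φ : 𝔤 [⋀^Fin (n + 1)]→ₗ[ℝ] ℝ) (hΦ : Φ ≠ 0)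
    (hhor : ∀ v : Fin (n + 1) → 𝔤, (∃ i, v i ∈ 𝔥) → Φ v = 0)
    (hinv : ∀ X ∈ 𝔥, ∀ v : Fin (n + 1) → 𝔤,
      ∑ i, Φ (Function.update v i ⁅X, v i⁆) = 0)
    (Y : 𝔤) (hY : Y ∈ 𝔥.normalizer) :
    ∀ x : Fin (n + 1) → 𝔤,
      ceD n (fun w => Φ (Matrix.vecCons Y w)) x =
        -(LinearMap.trace ℝ _ (adQN 𝔥 Y hY)) * Φ x :=
  stmt2_general 𝔤 𝔥 n hN Φ hhor hinv Y hY
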